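/- Intersection of CPZs via constraint augmentation: for two CPZs CPZ₁ = ⟨c₁,G₁,E₁,A₁,b₁,R₁⟩ and CPZ₂ = ⟨c₂,G₂,E₂,A₂,b₂,R₂⟩ with p₁ and p₂ factors, their intersection CPZ₁ ∩ CPZ₂ equals the CPZ with p₁+p₂ factors, starting point c₁, generators G₁, exponents [E₁;0], and constraints given by: Σᵢ α^{R₁-cols} A₁_{·,i} = b₁ (on the first p₁ factors), Σᵢ α^{R₂-cols} A₂_{·,i} = b₂ (on the last p₂ factors), and c₁ + Σᵢ α^{E₁-cols} G₁_{·,i} = c₂ + Σᵢ α^{E₂-cols} G₂_{·,i}. -/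

import Mathlib

/-! Concatenate the factors as `α = Sum.elim α₁ α₂`. Every row block of the augmented constraint
involves the factors of only one CPZ, except the last, which reads `P₁ α₁ - P₂ α₂ = c₂ - c₁`
for the polynomial maps `Pᵢ` of the two CPZs: the two original constraint systems together with
the equality of the two parametrized points `c₁ + P₁ α₁ = c₂ + P₂ α₂`. -/

open Finset Matrix Set

noncomputable section

/-- Monomial `∏ k, α k ^ e k`. -/
def mono {p : Type*} [Fintype p] (α : p → ℝ) (e : p → ℕ) : ℝ := ∏ k, α k ^ e k

/-- All factors lie in `[-1,1]`. -/
def inBox {p : Type*} (α : p → ℝ) : Prop := ∀ k, α k ∈ Set.Icc (-1 : ℝ) 1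

/-- Constrained polynomial zonotope. -/
def CPZ {n p h m q : Type*} [Fintype n] [Fintype p] [Fintype h] [Fintype m] [Fintype q]
    (c : n → ℝ) (G : Matrix n h ℝ) (E : Matrix p h ℕ)
    (A : Matrix m q ℝ) (b : m → ℝ) (R : Matrix p q ℕ) : Set (n → ℝ) :=
  {x | ∃ α : p → ℝ, inBox α ∧
    (∑ i, mono α (fun k => R k i) • (fun j => A j i)) = b ∧
    x = c + ∑ i, mono α (fun k => E k i) • (fun j => G j i)}
variable {n p₁ p₂ h₁ h₂ m₁ m₂ q₁ q₂ : ℕ}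

/-- Exponent matrix [E₁;0] of the intersection CPZ. -/
def interE (E₁ : Matrix (Fin p₁) (Fin h₁) ℕ) :
    Matrix (Fin p₁ ⊕ Fin p₂) (Fin h₁) ℕ :=
  fun k i => match k with
    | .inl kk => E₁ kk i
    | .inr _ => 0

/-- Constraint matrix of the intersection CPZ. -/
def interA (A₁ : Matrix (Fin m₁) (Fin q₁) ℝ) (A₂ : Matrix (Fin m₂) (Fin q₂) ℝ)
    (G₁ : Matrix (Fin n) (Fin h₁) ℝ) (G₂ : Matrix (Fin n) (Fin h₂) ℝ) :
    Matrix ((Fin m₁ ⊕ Fin m₂) ⊕ Fin n) ((Fin q₁ ⊕ Fin q₂) ⊕ (Fin h₁ ⊕ Fin h₂)) ℝ :=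
  fun r j => match r, j with
    | .inl (.inl rr), .inl (.inl jj) => A₁ rr jj
    | .inl (.inr rr), .inl (.inr jj) => A₂ rr jj
    | .inr rr, .inr (.inl jj) => G₁ rr jj
    | .inr rr, .inr (.inr jj) => -G₂ rr jj
    | _, _ => 0

/-- Constraint exponent matrix of the intersection CPZ. -/
def interR (R₁ : Matrix (Fin p₁) (Fin q₁) ℕ) (R₂ : Matrix (Fin p₂) (Fin q₂) ℕ)
    (E₁ : Matrix (Fin p₁) (Fin h₁) ℕ) (E₂ : Matrix (Fin p₂) (Fin h₂) ℕ) :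
    Matrix (Fin p₁ ⊕ Fin p₂) ((Fin q₁ ⊕ Fin q₂) ⊕ (Fin h₁ ⊕ Fin h₂)) ℕ :=
  fun k j => match k, j with
    | .inl kk, .inl (.inl jj) => R₁ kk jj
    | .inr kk, .inl (.inr jj) => R₂ kk jj
    | .inl kk, .inr (.inl jj) => E₁ kk jj
    | .inr kk, .inr (.inr jj) => E₂ kk jj
    | _, _ => 0


def polyMap {n p h : Type*} [Fintype p] [Fintype h] (E : Matrix p h ℕ) (G : Matrix n h ℝ)
    (α : p → ℝ) : n → ℝ :=
  ∑ i, mono α (fun k => E k i) • (fun j => G j i)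

theorem mem_CPZ_iff {n p h m q : Type*} [Fintype n] [Fintype p] [Fintype h] [Fintype m]
    [Fintype q] {c : n → ℝ} {G : Matrix n h ℝ} {E : Matrix p h ℕ} {A : Matrix m q ℝ}
    {b : m → ℝ} {R : Matrix p q ℕ} {x : n → ℝ} :
    x ∈ CPZ c G E A b R ↔ ∃ α, inBox α ∧ polyMap R A α = b ∧ x = c + polyMap E G α :=
  Iff.rfl

theorem inBox_sumElim {p₁ p₂ : Type*} {α₁ : p₁ → ℝ} {α₂ : p₂ → ℝ} :
    inBox (Sum.elim α₁ α₂) ↔ inBox α₁ ∧ inBox α₂ :=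
  Sum.forall

theorem mono_sumElim {p₁ p₂ : Type*} [Fintype p₁] [Fintype p₂] (α₁ : p₁ → ℝ) (α₂ : p₂ → ℝ)
    (e : p₁ ⊕ p₂ → ℕ) :
    mono (Sum.elim α₁ α₂) e = mono α₁ (e ∘ Sum.inl) * mono α₂ (e ∘ Sum.inr) :=
  Fintype.prod_sum_type _

@[simp]
theorem mono_exp_zero {p : Type*} [Fintype p] (α : p → ℝ) : mono α (fun _ => 0) = 1 := by
  simp [mono]

theorem polyMap_interE (E₁ : Matrix (Fin p₁) (Fin h₁) ℕ) (G₁ : Matrix (Fin n) (Fin h₁) ℝ)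
    (α₁ : Fin p₁ → ℝ) (α₂ : Fin p₂ → ℝ) :
    polyMap (interE E₁) G₁ (Sum.elim α₁ α₂) = polyMap E₁ G₁ α₁ := by
  simp [polyMap, mono_sumElim, interE, Function.comp_def]

theorem polyMap_interR (A₁ : Matrix (Fin m₁) (Fin q₁) ℝ) (A₂ : Matrix (Fin m₂) (Fin q₂) ℝ)
    (G₁ : Matrix (Fin n) (Fin h₁) ℝ) (G₂ : Matrix (Fin n) (Fin h₂) ℝ)
    (R₁ : Matrix (Fin p₁) (Fin q₁) ℕ) (R₂ : Matrix (Fin p₂) (Fin q₂) ℕ)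
    (E₁ : Matrix (Fin p₁) (Fin h₁) ℕ) (E₂ : Matrix (Fin p₂) (Fin h₂) ℕ)
    (α₁ : Fin p₁ → ℝ) (α₂ : Fin p₂ → ℝ) :
    polyMap (interR R₁ R₂ E₁ E₂) (interA A₁ A₂ G₁ G₂) (Sum.elim α₁ α₂) =
      Sum.elim (Sum.elim (polyMap R₁ A₁ α₁) (polyMap R₂ A₂ α₂))
        (polyMap E₁ G₁ α₁ - polyMap E₂ G₂ α₂) := by
  ext ((r | r) | r) <;>
    simp [polyMap, Fintype.sum_sum_type, mono_sumElim, interA, interR, Function.comp_def,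
      sub_eq_add_neg]

/-- Intersection of two CPZs via constraint augmentation. -/
theorem CPZ_intersection
    (c₁ : Fin n → ℝ) (G₁ : Matrix (Fin n) (Fin h₁) ℝ) (E₁ : Matrix (Fin p₁) (Fin h₁) ℕ)
    (A₁ : Matrix (Fin m₁) (Fin q₁) ℝ) (b₁ : Fin m₁ → ℝ) (R₁ : Matrix (Fin p₁) (Fin q₁) ℕ)
    (c₂ : Fin n → ℝ) (G₂ : Matrix (Fin n) (Fin h₂) ℝ) (E₂ : Matrix (Fin p₂) (Fin h₂) ℕ)
    (A₂ : Matrix (Fin m₂) (Fin q₂) ℝ) (b₂ : Fin m₂ → ℝ) (R₂ : Matrix (Fin p₂) (Fin q₂) ℕ) :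
    CPZ c₁ G₁ E₁ A₁ b₁ R₁ ∩ CPZ c₂ G₂ E₂ A₂ b₂ R₂ =
    CPZ c₁ G₁ (interE (p₂ := p₂) E₁) (interA A₁ A₂ G₁ G₂)
      (Sum.elim (Sum.elim b₁ b₂) (c₂ - c₁)) (interR R₁ R₂ E₁ E₂) := by
  ext x
  simp only [Set.mem_inter_iff, mem_CPZ_iff]
  constructor
  · rintro ⟨⟨α₁, hα₁, hA₁, rfl⟩, α₂, hα₂, hA₂, hx₂⟩
    refine ⟨Sum.elim α₁ α₂, inBox_sumElim.2 ⟨hα₁, hα₂⟩, ?_, by rw [polyMap_interE]⟩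
    rw [polyMap_interR, hA₁, hA₂]
    congr 1
    rw [sub_eq_sub_iff_add_eq_add, add_comm, hx₂]
  · rintro ⟨α, hα, hA, rfl⟩
    obtain ⟨α₁, α₂, rfl⟩ : ∃ α₁ α₂, α = Sum.elim α₁ α₂ := ⟨_, _, (Sum.elim_comp_inl_inr α).symm⟩
    obtain ⟨⟨hA₁, hA₂⟩, hG⟩ := by simpa only [polyMap_interR, Sum.elim_eq_iff] using hA
    obtain ⟨hα₁, hα₂⟩ := inBox_sumElim.1 hα
    rw [polyMap_interE]
    refine ⟨⟨α₁, hα₁, hA₁, rfl⟩, α₂, hα₂, hA₂, ?_⟩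
    rwa [sub_eq_sub_iff_add_eq_add, add_comm] at hG
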